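/- arXiv:2409.09778 — 4 statements merged into one kernel-verified Lean document; each statement's English description precedes it below -/
import Mathlib

section
/- Let f_D = (1/n)∑_{i=1}^n f_{z_i} and f_{D'} = (1/(n-m))∑_{i=1}^{n-m} f_{z_i}, where each f_{z_i} has L-Lipschitz gradient and ‖∇f_{z_i}(θ)‖ ≤ G for all θ. Let θ_t and θ'_t be gradient descent iterates with step size η on f_D and f_{D'} respectively, both starting from θ_0. Then ‖θ_t − θ'_t‖ ≤ (2Gm/(Ln))·((1 + ηLn/(n−m))^t − 1) for all t. -/
open Finset

/-!
Write `δ_t = ‖θ_t - θ'_t‖`. One gradient step gives `δ_{t+1} ≤ (1 + ηL) δ_t + η ε`: `∇f_{D'}` is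
`L`-Lipschitz as an average of `L`-Lipschitz gradients, and `‖∇f_D - ∇f_{D'}‖ ≤ ε = 2Gm/n`, since
`f_D - f_{D'}` reweights the `n - m` retained gradients by `1/n - 1/(n-m)` and adds the `m` others
with weight `1/n`. With `ρ = 1 + ηLn/(n-m) ≥ 1 + ηL` and `K = 2Gm/(Ln)` one has
`K (ρ - 1) = 2Gmη/(n-m) ≥ η ε`, so `δ_{t+1} ≤ ρ δ_t + K (ρ - 1)` and `δ_t ≤ K (ρ^t - 1)` by induction.
-/

theorem gradient_const_mul_sum {E ι : Type*} [NormedAddCommGroup E] [InnerProductSpace ℝ E]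
    [CompleteSpace E] {f : ι → E → ℝ} {x : E} (s : Finset ι) (c : ℝ)
    (hf : ∀ i ∈ s, DifferentiableAt ℝ (f i) x) :
    gradient (fun y ↦ c * ∑ i ∈ s, f i y) x = c • ∑ i ∈ s, gradient (f i) x := by
  simp only [gradient, fderiv_const_mul (DifferentiableAt.fun_sum hf), fderiv_fun_sum hf,
    map_smul, map_sum]

theorem norm_smul_sum_le_of_norm_le {E ι : Type*} [SeminormedAddCommGroup E] [NormedSpace ℝ E]
    {v : ι → E} {B c : ℝ} (s : Finset ι) (hc : 0 ≤ c) (hv : ∀ i ∈ s, ‖v i‖ ≤ B) :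
    ‖c • ∑ i ∈ s, v i‖ ≤ c * (#s * B) := by
  rw [norm_smul, Real.norm_of_nonneg hc]
  gcongr
  simpa using norm_sum_le_of_le s hv

theorem norm_average_range_le {E : Type*} [SeminormedAddCommGroup E] [NormedSpace ℝ E]
    {v : ℕ → E} {B : ℝ} {k : ℕ} (hk : 0 < k) (hv : ∀ i, ‖v i‖ ≤ B) :
    ‖(1 / (k : ℝ)) • ∑ i ∈ range k, v i‖ ≤ B := by
  calc _ ≤ 1 / (k : ℝ) * (#(range k) * B) :=
        norm_smul_sum_le_of_norm_le _ (by positivity) fun i _ ↦ hv i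
    _ = B := by rw [card_range]; field_simp

theorem norm_average_range_sub_average_range_le {E : Type*} [SeminormedAddCommGroup E]
    [NormedSpace ℝ E] {v : ℕ → E} {G : ℝ} {n m : ℕ} (hmn : m < n) (hv : ∀ i, ‖v i‖ ≤ G) :
    ‖(1 / (n : ℝ)) • ∑ i ∈ range n, v i - (1 / ((n - m : ℕ) : ℝ)) • ∑ i ∈ range (n - m), v i‖
      ≤ 2 * G * m / n := by
  obtain ⟨k, hk, rfl⟩ : ∃ k, 0 < k ∧ n = k + m := ⟨n - m, by omega, by omega⟩
  rw [Nat.add_sub_cancel, ← sum_range_add_sum_Ico _ (Nat.le_add_right k m)]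
  push_cast
  have hk0 : (0 : ℝ) < k := by exact_mod_cast hk
  have hcoef : 0 ≤ 1 / (k : ℝ) - 1 / (k + m) := by
    rw [sub_nonneg]; gcongr; exact le_add_of_nonneg_right m.cast_nonneg
  have hsplit : (1 / ((k : ℝ) + m)) • (∑ i ∈ range k, v i + ∑ i ∈ Ico k (k + m), v i)
        - (1 / (k : ℝ)) • ∑ i ∈ range k, v i
      = -((1 / (k : ℝ) - 1 / (k + m)) • ∑ i ∈ range k, v i
        - (1 / ((k : ℝ) + m)) • ∑ i ∈ Ico k (k + m), v i) := by
    module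
  rw [hsplit, norm_neg]
  calc _ ≤ _ := norm_sub_le _ _
    _ ≤ (1 / (k : ℝ) - 1 / (k + m)) * (#(range k) * G)
          + 1 / ((k : ℝ) + m) * (#(Ico k (k + m)) * G) := by
        gcongr
        · exact norm_smul_sum_le_of_norm_le _ hcoef fun i _ ↦ hv i
        · exact norm_smul_sum_le_of_norm_le _ (by positivity) fun i _ ↦ hv i
    _ = 2 * G * m / (k + m) := by
        rw [card_range, Nat.card_Ico, Nat.add_sub_cancel_left]
        field_simp
        ring

theorem norm_gradient_step_sub_le {E : Type*} [SeminormedAddCommGroup E] [NormedSpace ℝ E]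
    {g h : E → E} {η L ε : ℝ} (hη : 0 ≤ η) (hh : ∀ x y, ‖h x - h y‖ ≤ L * ‖x - y‖)
    (hgh : ∀ x, ‖g x - h x‖ ≤ ε) (x y : E) :
    ‖(x - η • g x) - (y - η • h y)‖ ≤ (1 + η * L) * ‖x - y‖ + η * ε := by
  have hsplit : (x - η • g x) - (y - η • h y) = (x - y) - η • (h x - h y) - η • (g x - h x) := by
    module
  rw [hsplit]
  calc _ ≤ ‖x - y‖ + ‖η • (h x - h y)‖ + ‖η • (g x - h x)‖ :=
        (norm_sub_le _ _).trans (by gcongr; exact norm_sub_le _ _)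
    _ ≤ ‖x - y‖ + η * (L * ‖x - y‖) + η * ε := by
        rw [norm_smul, norm_smul, Real.norm_of_nonneg hη]
        gcongr
        exacts [hh x y, hgh x]
    _ = (1 + η * L) * ‖x - y‖ + η * ε := by ring

theorem le_mul_pow_sub_one_of_le_mul_add {u : ℕ → ℝ} {ρ K : ℝ} (hρ : 0 ≤ ρ) (h0 : u 0 ≤ 0)
    (hu : ∀ t, u (t + 1) ≤ ρ * u t + K * (ρ - 1)) (t : ℕ) : u t ≤ K * (ρ ^ t - 1) := by
  induction t with
  | zero => simpa using h0
  | succ t ih =>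
    calc u (t + 1) ≤ ρ * u t + K * (ρ - 1) := hu t
      _ ≤ ρ * (K * (ρ ^ t - 1)) + K * (ρ - 1) := by gcongr
      _ = K * (ρ ^ (t + 1) - 1) := by ring

theorem gd_trajectory_divergence_general (d n m : ℕ) (hmn : m < n)
    (fz : ℕ → EuclideanSpace ℝ (Fin d) → ℝ) (L G η : ℝ)
    (hL : 0 < L) (hη : 0 < η)
    (hdiff : ∀ i, Differentiable ℝ (fz i))
    (hlip : ∀ i, ∀ x y : EuclideanSpace ℝ (Fin d),
      ‖gradient (fz i) x - gradient (fz i) y‖ ≤ L * ‖x - y‖)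
    (hbdd : ∀ i, ∀ x : EuclideanSpace ℝ (Fin d), ‖gradient (fz i) x‖ ≤ G)
    (fD fD' : EuclideanSpace ℝ (Fin d) → ℝ)
    (hfD : ∀ θ, fD θ = (1 / (n : ℝ)) * ∑ i ∈ range n, fz i θ)
    (hfD' : ∀ θ, fD' θ = (1 / ((n : ℝ) - m)) * ∑ i ∈ range (n - m), fz i θ)
    (θ θ' : ℕ → EuclideanSpace ℝ (Fin d))
    (h0 : θ 0 = θ' 0)
    (hθ : ∀ t, θ (t + 1) = θ t - η • gradient fD (θ t))
    (hθ' : ∀ t, θ' (t + 1) = θ' t - η • gradient fD' (θ' t)) :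
    ∀ t : ℕ, ‖θ t - θ' t‖ ≤
      (2 * G * m / (L * n)) * ((1 + η * L * n / ((n : ℝ) - m)) ^ t - 1) := by
  rw [← Nat.cast_sub hmn.le] at hfD' ⊢
  have hgrad {c : ℝ} {s : Finset ℕ} {f : _ → ℝ} (hf : ∀ θ, f θ = c * ∑ i ∈ s, fz i θ) (x) :
      gradient f x = c • ∑ i ∈ s, gradient (fz i) x := by
    rw [funext hf, gradient_const_mul_sum s c fun i _ ↦ (hdiff i).differentiableAt]
  have hlipD' (x y) : ‖gradient fD' x - gradient fD' y‖ ≤ L * ‖x - y‖ := by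
    rw [hgrad hfD', hgrad hfD', ← smul_sub, ← sum_sub_distrib]
    exact norm_average_range_le (Nat.sub_pos_of_lt hmn) fun i ↦ hlip i x y
  have hbias (x) : ‖gradient fD x - gradient fD' x‖ ≤ 2 * G * m / n := by
    rw [hgrad hfD, hgrad hfD']
    exact norm_average_range_sub_average_range_le hmn fun i ↦ hbdd i x
  refine le_mul_pow_sub_one_of_le_mul_add (by positivity) (by simp [h0]) fun t ↦ ?_
  rw [hθ, hθ']
  refine (norm_gradient_step_sub_le hη.le hlipD' hbias _ _).trans ?_
  have hk : (0 : ℝ) < (n - m : ℕ) := by exact_mod_cast Nat.sub_pos_of_lt hmn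
  have hkn : ((n - m : ℕ) : ℝ) ≤ n := by exact_mod_cast Nat.sub_le n m
  have hG : 0 ≤ G := (norm_nonneg _).trans (hbdd 0 0)
  gcongr ?_ * _ + ?_
  · have : η * L ≤ η * L * n / (n - m : ℕ) := by rw [le_div_iff₀ hk]; gcongr
    linarith
  · rw [add_sub_cancel_left]
    field_simp
    gcongr

/-- Divergence bound between gradient descent iterates on the full-data loss
`f_D = (1/n)∑_{i<n} f_i` and the retained-data loss `f_{D'} = (1/(n-m))∑_{i<n-m} f_i`,
both started from `θ 0 = θ' 0`. -/
theorem gd_trajectory_divergence (d n m : ℕ) (hm : 1 ≤ m) (hmn : m < n)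
    (fz : ℕ → EuclideanSpace ℝ (Fin d) → ℝ) (L G η : ℝ)
    (hL : 0 < L) (hG : 0 < G) (hη : 0 < η)
    (hdiff : ∀ i, Differentiable ℝ (fz i))
    (hlip : ∀ i, ∀ x y : EuclideanSpace ℝ (Fin d),
      ‖gradient (fz i) x - gradient (fz i) y‖ ≤ L * ‖x - y‖)
    (hbdd : ∀ i, ∀ x : EuclideanSpace ℝ (Fin d), ‖gradient (fz i) x‖ ≤ G)
    (fD fD' : EuclideanSpace ℝ (Fin d) → ℝ)
    (hfD : ∀ θ, fD θ = (1 / (n : ℝ)) * ∑ i ∈ range n, fz i θ)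
    (hfD' : ∀ θ, fD' θ = (1 / ((n : ℝ) - m)) * ∑ i ∈ range (n - m), fz i θ)
    (θ θ' : ℕ → EuclideanSpace ℝ (Fin d))
    (h0 : θ 0 = θ' 0)
    (hθ : ∀ t, θ (t + 1) = θ t - η • gradient fD (θ t))
    (hθ' : ∀ t, θ' (t + 1) = θ' t - η • gradient fD' (θ' t)) :
    ∀ t : ℕ, ‖θ t - θ' t‖ ≤
      (2 * G * m / (L * n)) * ((1 + η * L * n / ((n : ℝ) - m)) ^ t - 1) :=
  gd_trajectory_divergence_general d n m hmn fz L G η hL hη hdiff hlip hbdd fD fD' hfD hfD' θ θ' h0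
    hθ hθ'
end

section
/- For fixed T ≥ 0, η > 0, L > 0, and n > m ≥ 1, the function h(K) = ((1 + ηLn/(n−m))^{T−K} − 1)·(1 + ηL)^K is monotonically decreasing in K on [0, T]. -/
open Real

/-- Since `a ^ (T - K) * b ^ K = a ^ T * (b / a) ^ K`, the function is the sum of the strictly
decreasing `a ^ T * (b / a) ^ K` and the decreasing `-b ^ K`. -/
theorem strictAnti_rpow_sub_sub_one_mul_rpow {a b : ℝ} (hb : 1 ≤ b) (hab : b < a) (T : ℝ) :
    StrictAnti fun K : ℝ => (a ^ (T - K) - 1) * b ^ K := by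
  have ha : 0 < a := by linarith
  have hb₀ : 0 < b := by linarith
  have h_eq : ∀ K : ℝ, (a ^ (T - K) - 1) * b ^ K = a ^ T * (b / a) ^ K + -b ^ K := by
    intro K
    have : 0 < a ^ K := rpow_pos_of_pos ha K
    rw [rpow_sub ha, div_rpow hb₀.le ha.le]
    field_simp
    ring
  have h_ratio : StrictAnti fun K : ℝ => a ^ T * (b / a) ^ K :=
    (strictAnti_rpow_of_base_lt_one (div_pos hb₀ ha) ((div_lt_one ha).2 hab)).const_mul
      (rpow_pos_of_pos ha T)
  simpa only [h_eq] using h_ratio.add_antitone (monotone_rpow_of_base_ge_one hb).neg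

theorem lt_mul_div_sub {c m n : ℝ} (hc : 0 < c) (hm : 0 < m) (hmn : m < n) :
    c < c * n / (n - m) := by
  rw [lt_div_iff₀ (sub_pos.2 hmn)]
  nlinarith

theorem h_strictly_decreasing_general (T η L n m : ℝ)
    (hη : 0 < η) (hL : 0 < L) (hm : 1 ≤ m) (hmn : m < n) :
    StrictAntiOn (fun K : ℝ =>
      ((1 + η * L * n / (n - m)) ^ (T - K) - 1) * (1 + η * L) ^ K)
      (Set.Icc 0 T) := by
  have hηL : 0 < η * L := mul_pos hη hL
  have h_base : 1 + η * L < 1 + η * L * n / (n - m) := by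
    linarith [lt_mul_div_sub hηL (by linarith) hmn]
  exact (strictAnti_rpow_sub_sub_one_mul_rpow (by linarith) h_base T).strictAntiOn _

/-- For `T ≥ 0`, `η, L > 0` and reals `n > m ≥ 1`, the function
`h(K) = ((1 + ηLn/(n-m))^(T-K) - 1) * (1 + ηL)^K` is monotonically decreasing on `[0, T]`. -/
theorem h_strictly_decreasing (T η L n m : ℝ) (hT : 0 ≤ T)
    (hη : 0 < η) (hL : 0 < L) (hm : 1 ≤ m) (hmn : m < n) :
    StrictAntiOn (fun K : ℝ =>
      ((1 + η * L * n / (n - m)) ^ (T - K) - 1) * (1 + η * L) ^ K)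
      (Set.Icc 0 T) :=
  h_strictly_decreasing_general T η L n m hη hL hm hmn
end

section
/- Suppose f is differentiable with L-Lipschitz gradient, attains a global minimum f*, and satisfies the PL inequality (1/2)‖∇f(x)‖² ≥ μ(f(x) − f*) for all x with μ > 0. Then gradient descent with step size 0 < η ≤ 1/L satisfies f(θ_t) − f* ≤ (1 − ημ)^t (f(θ_0) − f*). -/
/-!
An `L`-smooth function lies below the quadratic `f x + ⟪∇f x, v⟫ + L/2 ‖v‖²` (descent
lemma), so a gradient step of length `η ≤ 1/L` lowers `f` by at least `η/2 ‖∇f x‖²`. The PL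
inequality bounds this decrease from below by `η μ (f x - f*)`, so the gap `f θₜ - f*` contracts
by the factor `1 - ημ` at every step.
-/

open InnerProductSpace Set

section Smooth

variable {E : Type*} [NormedAddCommGroup E] [InnerProductSpace ℝ E] [CompleteSpace E]
  {f : E → ℝ} {L : ℝ}

theorem hasDerivAt_comp_add_smul_of_differentiableAt {x v : E} {t : ℝ}
    (hf : DifferentiableAt ℝ f (x + t • v)) :
    HasDerivAt (fun s : ℝ => f (x + s • v)) ⟪gradient f (x + t • v), v⟫_ℝ t := by
  have hline : HasDerivAt (fun s : ℝ => x + s • v) v t := by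
    simpa using ((hasDerivAt_id t).smul_const v).const_add x
  exact (hasGradientAt_iff_hasFDerivAt.mp hf.hasGradientAt).comp_hasDerivAt t hline

theorem inner_gradient_add_smul_sub_le
    (hlip : ∀ x y, ‖gradient f x - gradient f y‖ ≤ L * ‖x - y‖) (x v : E) {s : ℝ} (hs : 0 ≤ s) :
    ⟪gradient f (x + s • v) - gradient f x, v⟫_ℝ ≤ L * s * ‖v‖ ^ 2 :=
  calc ⟪gradient f (x + s • v) - gradient f x, v⟫_ℝ
      ≤ ‖gradient f (x + s • v) - gradient f x‖ * ‖v‖ := real_inner_le_norm _ _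
    _ ≤ L * ‖s • v‖ * ‖v‖ := by
        gcongr
        simpa using hlip (x + s • v) x
    _ = L * s * ‖v‖ ^ 2 := by rw [norm_smul, Real.norm_of_nonneg hs]; ring

theorem le_add_inner_gradient_add_sq_of_lipschitz_gradient (hf : Differentiable ℝ f)
    (hlip : ∀ x y, ‖gradient f x - gradient f y‖ ≤ L * ‖x - y‖) (x v : E) :
    f (x + v) ≤ f x + ⟪gradient f x, v⟫_ℝ + L / 2 * ‖v‖ ^ 2 := by
  set φ : ℝ → ℝ := fun s =>
    f (x + s • v) - s * ⟪gradient f x, v⟫_ℝ - L / 2 * s ^ 2 * ‖v‖ ^ 2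
  have hφ : ∀ s, HasDerivAt φ
      (⟪gradient f (x + s • v) - gradient f x, v⟫_ℝ - L * s * ‖v‖ ^ 2) s := by
    intro s
    have hquad : HasDerivAt (fun s : ℝ => L / 2 * s ^ 2 * ‖v‖ ^ 2) (L * s * ‖v‖ ^ 2) s :=
      (((hasDerivAt_pow 2 s).const_mul (L / 2)).mul_const (‖v‖ ^ 2)).congr_deriv
        (by push_cast; ring)
    refine (((hasDerivAt_comp_add_smul_of_differentiableAt (hf (x + s • v))).sub
      ((hasDerivAt_id s).mul_const ⟪gradient f x, v⟫_ℝ)).sub hquad).congr_deriv ?_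
    rw [inner_sub_left, one_mul]
  have hanti : AntitoneOn φ (Icc 0 1) := by
    refine antitoneOn_of_hasDerivWithinAt_nonpos (convex_Icc 0 1)
      (fun s _ => (hφ s).continuousAt.continuousWithinAt)
      (fun s _ => (hφ s).hasDerivWithinAt) fun s hs => ?_
    rw [interior_Icc] at hs
    exact sub_nonpos.mpr (inner_gradient_add_smul_sub_le hlip x v hs.1.le)
  have h01 := hanti (left_mem_Icc.mpr zero_le_one) (right_mem_Icc.mpr zero_le_one) zero_le_one
  simp only [φ, zero_smul, one_smul, add_zero] at h01
  linarith

theorem le_sub_sq_norm_gradient_of_lipschitz_gradient (hf : Differentiable ℝ f)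
    (hlip : ∀ x y, ‖gradient f x - gradient f y‖ ≤ L * ‖x - y‖) (x : E) {η : ℝ}
    (hη : 0 ≤ η) (hηL : η * L ≤ 1) :
    f (x - η • gradient f x) ≤ f x - η / 2 * ‖gradient f x‖ ^ 2 := by
  have hdesc :=
    le_add_inner_gradient_add_sq_of_lipschitz_gradient hf hlip x (-(η • gradient f x))
  rw [← sub_eq_add_neg, inner_neg_right, real_inner_smul_right, real_inner_self_eq_norm_sq,
    norm_neg, norm_smul, Real.norm_of_nonneg hη] at hdesc
  nlinarith [mul_nonneg (mul_nonneg hη (sq_nonneg ‖gradient f x‖)) (sub_nonneg.mpr hηL)]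

end Smooth

theorem le_pow_mul_of_le_mul_of_nonneg {u : ℕ → ℝ} {c : ℝ} (hu : ∀ n, 0 ≤ u n)
    (h : ∀ n, u (n + 1) ≤ c * u n) (n : ℕ) : u n ≤ c ^ n * u 0 := by
  rcases le_or_gt 0 c with hc | hc
  · exact le_geom hc n fun k _ => h k
  · -- A negative factor forces `u 0 = 0` and `u (k + 1) ≤ c * u k ≤ 0`.
    have h0 : u 0 = 0 := le_antisymm (by nlinarith [h 0, hu 1]) (hu 0)
    cases n with
    | zero => simp
    | succ k => rw [h0, mul_zero]; nlinarith [h k, hu k]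

theorem gd_linear_convergence_PL_general (d : ℕ) (f : EuclideanSpace ℝ (Fin d) → ℝ)
    (L μ η fstar : ℝ) (hη : 0 < η) (hηL : η ≤ 1 / L)
    (hdiff : Differentiable ℝ f)
    (hlip : ∀ x y : EuclideanSpace ℝ (Fin d),
      ‖gradient f x - gradient f y‖ ≤ L * ‖x - y‖)
    (hlb : ∀ x : EuclideanSpace ℝ (Fin d), fstar ≤ f x)
    (hPL : ∀ x : EuclideanSpace ℝ (Fin d),
      μ * (f x - fstar) ≤ (1 / 2) * ‖gradient f x‖ ^ 2)
    (θ : ℕ → EuclideanSpace ℝ (Fin d))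
    (hθ : ∀ t, θ (t + 1) = θ t - η • gradient f (θ t)) :
    ∀ t : ℕ, f (θ t) - fstar ≤ (1 - η * μ) ^ t * (f (θ 0) - fstar) := by
  have hL : 0 < L := one_div_pos.mp (hη.trans_le hηL)
  have hηL' : η * L ≤ 1 := by rwa [le_div_iff₀ hL] at hηL
  have hstep : ∀ t, f (θ (t + 1)) - fstar ≤ (1 - η * μ) * (f (θ t) - fstar) := by
    intro t
    have hdecrease := le_sub_sq_norm_gradient_of_lipschitz_gradient hdiff hlip (θ t) hη.le hηL'
    have hPL_step := mul_le_mul_of_nonneg_left (hPL (θ t)) hη.le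
    rw [hθ t]
    linarith
  exact le_pow_mul_of_le_mul_of_nonneg (fun t => sub_nonneg.mpr (hlb (θ t))) hstep

/-- Linear convergence of gradient descent on an `L`-smooth function satisfying
the Polyak–Łojasiewicz inequality with constant `μ`. -/
theorem gd_linear_convergence_PL (d : ℕ) (f : EuclideanSpace ℝ (Fin d) → ℝ)
    (L μ η fstar : ℝ) (hL : 0 < L) (hμ : 0 < μ) (hη : 0 < η) (hηL : η ≤ 1 / L)
    (hdiff : Differentiable ℝ f)
    (hlip : ∀ x y : EuclideanSpace ℝ (Fin d),
      ‖gradient f x - gradient f y‖ ≤ L * ‖x - y‖)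
    (hmin : ∃ x0 : EuclideanSpace ℝ (Fin d), f x0 = fstar)
    (hlb : ∀ x : EuclideanSpace ℝ (Fin d), fstar ≤ f x)
    (hPL : ∀ x : EuclideanSpace ℝ (Fin d),
      μ * (f x - fstar) ≤ (1 / 2) * ‖gradient f x‖ ^ 2)
    (θ : ℕ → EuclideanSpace ℝ (Fin d))
    (hθ : ∀ t, θ (t + 1) = θ t - η • gradient f (θ t)) :
    ∀ t : ℕ, f (θ t) - fstar ≤ (1 - η * μ) ^ t * (f (θ 0) - fstar) :=
  gd_linear_convergence_PL_general d f L μ η fstar hη hηL hdiff hlip hlb hPL θ hθ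
end

section
/- Under the assumptions of the unlearning theorem (each f_z with L-Lipschitz gradient and ‖∇f_z‖ ≤ G, step size η ≤ min{1/L, n/(2(n−m)L)}), the noiseless outputs satisfy ‖θ'_T − θ''_K‖ ≤ (2mG/(Ln))·((1 + ηLn/(n−m))^{T−K} − 1)·(1 + ηL)^K, where θ'_T is the retraining output (T gradient descent steps on f_{D'} from θ_0) and θ''_K is the unlearning output (T−K steps on f_D from θ_0 followed by K steps on f_{D'}). -/
/-!
During the last `K` steps both runs are gradient descent on `f_{D'}`, whose gradient is
`L`-Lipschitz, so their distance grows at most by the factor `1 + ηL` per step. At the rewind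
point `T - K` that distance is the gap between descent on `f_D` and on `f_{D'}` from the same
start; since `‖∇f_D - ∇f_{D'}‖ ≤ 2mG/n` everywhere, a discrete Grönwall argument bounds it by
`(2mG/(Ln))((1 + ηL)^(T-K) - 1)`, and `1 + ηL ≤ 1 + ηLn/(n - m)`.
-/

open Finset

section Averages

variable {ι E : Type*} [SeminormedAddCommGroup E]

lemma norm_sum_le_card_mul (s : Finset ι) {v : ι → E} {G : ℝ} (hv : ∀ i ∈ s, ‖v i‖ ≤ G) :
    ‖∑ i ∈ s, v i‖ ≤ #s * G :=
  (norm_sum_le s v).trans <| (sum_le_card_nsmul s _ G hv).trans_eq (nsmul_eq_mul _ _)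

variable [NormedSpace ℝ E]

lemma norm_average_sub_average_le (s : Finset ι) (u v : ι → E) {r : ℝ} (hr : 0 ≤ r)
    (huv : ∀ i ∈ s, ‖u i - v i‖ ≤ r) :
    ‖(#s : ℝ)⁻¹ • ∑ i ∈ s, u i - (#s : ℝ)⁻¹ • ∑ i ∈ s, v i‖ ≤ r := by
  rw [← smul_sub, ← sum_sub_distrib, norm_smul, norm_inv, Real.norm_natCast]
  calc (#s : ℝ)⁻¹ * ‖∑ i ∈ s, (u i - v i)‖ ≤ (#s : ℝ)⁻¹ * (#s * r) := by
        gcongr; exact norm_sum_le_card_mul s huv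
    _ ≤ r := by
        rcases (#s).eq_zero_or_pos with hs | hs
        · simp [hs, hr]
        · rw [inv_mul_cancel_left₀ (by positivity)]

lemma norm_average_sub_average_subset_le [DecidableEq ι] {s t : Finset ι} (hst : s ⊆ t)
    (hs : s.Nonempty) {v : ι → E} {G : ℝ} (hv : ∀ i ∈ t, ‖v i‖ ≤ G) :
    ‖(#t : ℝ)⁻¹ • ∑ i ∈ t, v i - (#s : ℝ)⁻¹ • ∑ i ∈ s, v i‖ ≤ 2 * ((#t : ℝ) - #s) * G / #t := by
  have hs0 : (0 : ℝ) < #s := by exact_mod_cast hs.card_pos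
  have hst' : (#s : ℝ) ≤ #t := by exact_mod_cast card_le_card hst
  have hcard : (#(t \ s) : ℝ) = #t - #s := by
    rw [card_sdiff_of_subset hst, Nat.cast_sub (card_le_card hst)]
  have hsplit : (#t : ℝ)⁻¹ • ∑ i ∈ t, v i - (#s : ℝ)⁻¹ • ∑ i ∈ s, v i
      = (#t : ℝ)⁻¹ • ∑ i ∈ t \ s, v i + ((#t : ℝ)⁻¹ - (#s : ℝ)⁻¹) • ∑ i ∈ s, v i := by
    rw [← sum_sdiff hst, smul_add, sub_smul]; abel
  have ht0 : (#t : ℝ) ≠ 0 := (hs0.trans_le hst').ne'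
  have hinv : (#t : ℝ)⁻¹ ≤ (#s : ℝ)⁻¹ := inv_anti₀ hs0 hst'
  rw [hsplit]
  calc _ ≤ (#t : ℝ)⁻¹ * ‖∑ i ∈ t \ s, v i‖ + ((#s : ℝ)⁻¹ - (#t : ℝ)⁻¹) * ‖∑ i ∈ s, v i‖ := by
        refine (norm_add_le _ _).trans_eq ?_
        rw [norm_smul, norm_smul, Real.norm_of_nonneg (by positivity),
          Real.norm_of_nonpos (by linarith), neg_sub]
    _ ≤ (#t : ℝ)⁻¹ * ((#t - #s) * G) + ((#s : ℝ)⁻¹ - (#t : ℝ)⁻¹) * (#s * G) := by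
        rw [← hcard]
        have hout := norm_sum_le_card_mul (t \ s) fun i hi => hv i (sdiff_subset hi)
        have hin := norm_sum_le_card_mul s fun i hi => hv i (hst hi)
        gcongr
    _ = 2 * ((#t : ℝ) - #s) * G / #t := by field_simp; ring

end Averages

section Gradient

variable {ι E : Type*} [NormedAddCommGroup E] [InnerProductSpace ℝ E] [CompleteSpace E]
  {s : Finset ι} {fz : ι → E → ℝ} {f : E → ℝ}

lemma gradient_eq_smul_sum {c : ℝ} (hdiff : ∀ i ∈ s, Differentiable ℝ (fz i))
    (hf : ∀ x, f x = c * ∑ i ∈ s, fz i x) (x : E) :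
    gradient f x = c • ∑ i ∈ s, gradient (fz i) x := by
  refine HasGradientAt.gradient ?_
  rw [funext hf, hasGradientAt_iff_hasFDerivAt, map_smul, map_sum]
  exact (HasFDerivAt.fun_sum fun i hi => ((hdiff i hi) x).hasGradientAt.hasFDerivAt).const_mul c

lemma norm_gradient_sub_le_of_eq_average {L : ℝ} (hL : 0 ≤ L)
    (hdiff : ∀ i ∈ s, Differentiable ℝ (fz i))
    (hlip : ∀ i ∈ s, ∀ x y, ‖gradient (fz i) x - gradient (fz i) y‖ ≤ L * ‖x - y‖)
    (hf : ∀ x, f x = (#s : ℝ)⁻¹ * ∑ i ∈ s, fz i x) (x y : E) :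
    ‖gradient f x - gradient f y‖ ≤ L * ‖x - y‖ := by
  rw [gradient_eq_smul_sum hdiff hf, gradient_eq_smul_sum hdiff hf]
  exact norm_average_sub_average_le _ _ _ (by positivity) fun i hi => hlip i hi x y

end Gradient

section Descent

variable {E : Type*} [SeminormedAddCommGroup E] [NormedSpace ℝ E]
  {F F' : E → E} {L δ η : ℝ}

lemma norm_descent_step_sub_le (hη : 0 ≤ η) (hF : ∀ x y, ‖F x - F y‖ ≤ L * ‖x - y‖)
    (hFF' : ∀ x, ‖F x - F' x‖ ≤ δ) (x y : E) :
    ‖(x - η • F x) - (y - η • F' y)‖ ≤ (1 + η * L) * ‖x - y‖ + η * δ := by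
  have hsplit : (x - η • F x) - (y - η • F' y) = (x - y) - η • (F x - F y) - η • (F y - F' y) := by
    rw [smul_sub, smul_sub]; abel
  rw [hsplit]
  calc _ ≤ ‖x - y‖ + ‖η • (F x - F y)‖ + ‖η • (F y - F' y)‖ :=
        (norm_sub_le _ _).trans (add_le_add_left (norm_sub_le _ _) _)
    _ ≤ ‖x - y‖ + η * (L * ‖x - y‖) + η * δ := by
        rw [norm_smul, norm_smul, Real.norm_of_nonneg hη]
        gcongr
        exacts [hF x y, hFF' y]
    _ = (1 + η * L) * ‖x - y‖ + η * δ := by ring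

theorem norm_descent_sub_le (hL : 0 < L) (hη : 0 ≤ η) (hF : ∀ x y, ‖F x - F y‖ ≤ L * ‖x - y‖)
    (hFF' : ∀ x, ‖F x - F' x‖ ≤ δ) {x y : ℕ → E} (hx : ∀ t, x (t + 1) = x t - η • F (x t))
    (hy : ∀ t, y (t + 1) = y t - η • F' (y t)) (t : ℕ) :
    ‖x t - y t‖ ≤ (1 + η * L) ^ t * ‖x 0 - y 0‖ + δ / L * ((1 + η * L) ^ t - 1) := by
  induction t with
  | zero => simp
  | succ t ih =>
    rw [hx, hy]
    calc _ ≤ (1 + η * L) * ‖x t - y t‖ + η * δ := norm_descent_step_sub_le hη hF hFF' _ _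
      _ ≤ (1 + η * L) * ((1 + η * L) ^ t * ‖x 0 - y 0‖ + δ / L * ((1 + η * L) ^ t - 1))
          + η * δ := by gcongr
      _ = _ := by field_simp; ring

end Descent

theorem unlearning_sensitivity_bound_general (d n m T K : ℕ) (hmn : m < n)
    (hKT : K ≤ T)
    (fz : ℕ → EuclideanSpace ℝ (Fin d) → ℝ) (L G η : ℝ)
    (hL : 0 < L) (hη : 0 < η)
    (hdiff : ∀ i, Differentiable ℝ (fz i))
    (hlip : ∀ i, ∀ x y : EuclideanSpace ℝ (Fin d),
      ‖gradient (fz i) x - gradient (fz i) y‖ ≤ L * ‖x - y‖)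
    (hbdd : ∀ i, ∀ x : EuclideanSpace ℝ (Fin d), ‖gradient (fz i) x‖ ≤ G)
    (fD fD' : EuclideanSpace ℝ (Fin d) → ℝ)
    (hfD : ∀ x, fD x = (1 / (n : ℝ)) * ∑ i ∈ range n, fz i x)
    (hfD' : ∀ x, fD' x = (1 / ((n : ℝ) - m)) * ∑ i ∈ range (n - m), fz i x)
    (θ θ' θ'' : ℕ → EuclideanSpace ℝ (Fin d))
    (h0 : θ 0 = θ' 0)
    (hθ : ∀ t, θ (t + 1) = θ t - η • gradient fD (θ t))
    (hθ' : ∀ t, θ' (t + 1) = θ' t - η • gradient fD' (θ' t))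
    (hinit : θ'' 0 = θ (T - K))
    (hθ'' : ∀ t, θ'' (t + 1) = θ'' t - η • gradient fD' (θ'' t)) :
    ‖θ' T - θ'' K‖ ≤
      (2 * m * G / (L * n)) * ((1 + η * L * n / ((n : ℝ) - m)) ^ (T - K) - 1)
        * (1 + η * L) ^ K := by
  have hnm : ((n - m : ℕ) : ℝ) = n - m := Nat.cast_sub hmn.le
  have hnm0 : (0 : ℝ) < n - m := by rw [← hnm]; exact_mod_cast Nat.sub_pos_of_lt hmn
  have hG : 0 ≤ G := (norm_nonneg _).trans (hbdd 0 0)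
  have hfD₁ : ∀ x, fD x = (#(range n) : ℝ)⁻¹ * ∑ i ∈ range n, fz i x := by simpa using hfD
  have hfD'₁ : ∀ x, fD' x = (#(range (n - m)) : ℝ)⁻¹ * ∑ i ∈ range (n - m), fz i x := by
    simpa [hnm] using hfD'
  have hlipD :=
    norm_gradient_sub_le_of_eq_average hL.le (fun i _ => hdiff i) (fun i _ => hlip i) hfD₁
  have hlipD' :=
    norm_gradient_sub_le_of_eq_average hL.le (fun i _ => hdiff i) (fun i _ => hlip i) hfD'₁
  have hgap : ∀ x, ‖gradient fD x - gradient fD' x‖ ≤ 2 * m * G / n := fun x => by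
    rw [gradient_eq_smul_sum (fun i _ => hdiff i) hfD₁,
      gradient_eq_smul_sum (fun i _ => hdiff i) hfD'₁]
    refine (norm_average_sub_average_subset_le (range_subset_range.mpr (n.sub_le m))
      (nonempty_range_iff.mpr (by omega)) fun i _ => hbdd i x).trans_eq ?_
    simp [hnm]
  have rewind_gap := norm_descent_sub_le hL hη.le hlipD hgap hθ hθ' (T - K)
  have final_gap := norm_descent_sub_le (x := fun t => θ' (T - K + t)) (δ := 0) hL hη.le hlipD'
    (fun x => by simp) (fun t => hθ' _) hθ'' K
  simp only [Nat.sub_add_cancel hKT, add_zero, zero_add, hinit, h0, sub_self, norm_zero, mul_zero,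
    zero_div, zero_mul] at rewind_gap final_gap
  have hrate : η * L ≤ η * L * n / ((n : ℝ) - m) := by
    rw [le_div_iff₀ hnm0]
    exact mul_le_mul_of_nonneg_left (sub_le_self _ m.cast_nonneg) (by positivity)
  calc ‖θ' T - θ'' K‖ ≤ (1 + η * L) ^ K * ‖θ (T - K) - θ' (T - K)‖ := by
        rwa [norm_sub_rev (θ _)]
    _ ≤ (1 + η * L) ^ K * (2 * m * G / n / L * ((1 + η * L) ^ (T - K) - 1)) := by gcongr
    _ ≤ (1 + η * L) ^ K
          * (2 * m * G / n / L * ((1 + η * L * n / ((n : ℝ) - m)) ^ (T - K) - 1)) := by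
        gcongr
    _ = _ := by ring

/-- Sensitivity bound for the rewind-to-delete algorithm: the distance between
the retraining output `θ' T` and the noiseless unlearning output `θ'' K`. -/
theorem unlearning_sensitivity_bound (d n m T K : ℕ) (hm : 1 ≤ m) (hmn : m < n)
    (hKT : K ≤ T)
    (fz : ℕ → EuclideanSpace ℝ (Fin d) → ℝ) (L G η : ℝ)
    (hL : 0 < L) (hG : 0 < G) (hη : 0 < η)
    (hηmin : η ≤ min (1 / L) ((n : ℝ) / (2 * ((n : ℝ) - m) * L)))
    (hdiff : ∀ i, Differentiable ℝ (fz i))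
    (hlip : ∀ i, ∀ x y : EuclideanSpace ℝ (Fin d),
      ‖gradient (fz i) x - gradient (fz i) y‖ ≤ L * ‖x - y‖)
    (hbdd : ∀ i, ∀ x : EuclideanSpace ℝ (Fin d), ‖gradient (fz i) x‖ ≤ G)
    (fD fD' : EuclideanSpace ℝ (Fin d) → ℝ)
    (hfD : ∀ x, fD x = (1 / (n : ℝ)) * ∑ i ∈ range n, fz i x)
    (hfD' : ∀ x, fD' x = (1 / ((n : ℝ) - m)) * ∑ i ∈ range (n - m), fz i x)
    (θ θ' θ'' : ℕ → EuclideanSpace ℝ (Fin d))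
    (h0 : θ 0 = θ' 0)
    (hθ : ∀ t, θ (t + 1) = θ t - η • gradient fD (θ t))
    (hθ' : ∀ t, θ' (t + 1) = θ' t - η • gradient fD' (θ' t))
    (hinit : θ'' 0 = θ (T - K))
    (hθ'' : ∀ t, θ'' (t + 1) = θ'' t - η • gradient fD' (θ'' t)) :
    ‖θ' T - θ'' K‖ ≤
      (2 * m * G / (L * n)) * ((1 + η * L * n / ((n : ℝ) - m)) ^ (T - K) - 1)
        * (1 + η * L) ^ K :=
  unlearning_sensitivity_bound_general d n m T K hmn hKT fz L G η hL hη hdiff hlip hbdd fD fD' hfD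
    hfD' θ θ' θ'' h0 hθ hθ' hinit hθ''
end
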